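/- arXiv:1712.00595 — 3 statements merged into one kernel-verified Lean document; each statement's English description precedes it below -/
import Mathlib

section
/- Let n be a positive integer, let A and B be n×n row-stochastic real matrices, let 0 < c < 1, and let q ∈ ℝⁿ. Define r_old = ∑_{k=0}^∞ ((1−c)·Aᵀ)^k · (c·q), define q_offset = (1−c)·(Bᵀ − Aᵀ)·r_old, and define r_offset = ∑_{i=0}^∞ ((1−c)·Bᵀ)^i · q_offset. Then r_old + r_offset = ∑_{i=0}^∞ ((1−c)·Bᵀ)^i · (c·q); that is, the vector r_new = r_old + r_offset produced by OSP equals the exact RWR score vector of the updated graph. (Theorem 1: Exactness of OSP.) -/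
/-!
For row-stochastic `A` and `|t| < 1`, the map `w ↦ (t • Aᵀ) *ᵥ w` contracts the `ℓ¹` norm by
`|t|`, because the columns of `Aᵀ` have nonnegative entries summing to `1`. Hence the Neumann
series `∑ₖ (t • Aᵀ)ᵏ v` converges and is the unique solution of `w = v + (t • Aᵀ) *ᵥ w`.
With `t = 1 - c`, `r_old` solves this equation for `A`, and `r_offset` for `B` with right-hand
side `q_offset`; adding the two equations, the `Aᵀ`-terms cancel against `q_offset`, so
`r_old + r_offset` solves the equation for `B` with right-hand side `c • q`, and uniqueness
identifies it with the exact score vector.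
-/

open Matrix

/-- An `n × n` real matrix is row-stochastic if all its entries are nonnegative
and each of its rows sums to `1`. -/
def RowStochastic {n : ℕ} (M : Matrix (Fin n) (Fin n) ℝ) : Prop :=
  (∀ i j, 0 ≤ M i j) ∧ ∀ i, ∑ j, M i j = 1

theorem Matrix.tsum_pow_mulVec_eq_add {ι R : Type*} [Fintype ι] [DecidableEq ι] [CommRing R]
    [TopologicalSpace R] [IsTopologicalRing R] [T2Space R] {M : Matrix ι ι R} {v : ι → R}
    (hs : Summable fun k : ℕ => (M ^ k) *ᵥ v) :
    ∑' k : ℕ, (M ^ k) *ᵥ v = v + M *ᵥ ∑' k : ℕ, (M ^ k) *ᵥ v := by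
  have hmap := hs.map_tsum M.mulVecLin (continuous_const.matrix_mulVec continuous_id)
  rw [mulVecLin_apply] at hmap
  rw [hmap, hs.tsum_eq_zero_add, pow_zero, one_mulVec]
  simp [pow_succ', mulVec_mulVec]

namespace RowStochastic

variable {n : ℕ} {A : Matrix (Fin n) (Fin n) ℝ}

theorem sum_abs_transpose_mulVec_le (hA : RowStochastic A) (w : Fin n → ℝ) :
    ∑ j, |(Aᵀ *ᵥ w) j| ≤ ∑ i, |w i| :=
  calc ∑ j, |(Aᵀ *ᵥ w) j| = ∑ j, |∑ i, A i j * w i| := by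
        simp only [mulVec, dotProduct, transpose_apply]
    _ ≤ ∑ j, ∑ i, A i j * |w i| := by
        gcongr with j
        refine (Finset.abs_sum_le_sum_abs _ _).trans_eq (Finset.sum_congr rfl fun i _ => ?_)
        rw [abs_mul, abs_of_nonneg (hA.1 i j)]
    _ = ∑ i, |w i| := by
        simp only [Finset.sum_comm (γ := Fin n), ← Finset.sum_mul, hA.2, one_mul]

theorem sum_abs_smul_transpose_pow_mulVec_le (hA : RowStochastic A) (t : ℝ) (k : ℕ)
    (w : Fin n → ℝ) : ∑ j, |(((t • Aᵀ) ^ k) *ᵥ w) j| ≤ |t| ^ k * ∑ i, |w i| := by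
  induction k with
  | zero => simp
  | succ k ih =>
    rw [pow_succ', ← mulVec_mulVec, smul_mulVec]
    simp only [Pi.smul_apply, smul_eq_mul, abs_mul, ← Finset.mul_sum, pow_succ', mul_assoc]
    gcongr
    exact (hA.sum_abs_transpose_mulVec_le _).trans ih

theorem summable_smul_transpose_pow_mulVec (hA : RowStochastic A) {t : ℝ} (ht : |t| < 1)
    (v : Fin n → ℝ) : Summable fun k : ℕ => ((t • Aᵀ) ^ k) *ᵥ v := by
  refine Summable.of_norm_bounded
    ((summable_geometric_of_lt_one (abs_nonneg t) ht).mul_right (∑ i, |v i|)) fun k => ?_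
  refine (pi_norm_le_iff_of_nonneg (by positivity)).2 fun j => ?_
  rw [Real.norm_eq_abs]
  exact (Finset.single_le_sum (f := fun j => |(((t • Aᵀ) ^ k) *ᵥ v) j|)
    (fun _ _ => abs_nonneg _) (Finset.mem_univ j)).trans
    (hA.sum_abs_smul_transpose_pow_mulVec_le t k v)

theorem eq_zero_of_smul_transpose_mulVec_eq (hA : RowStochastic A) {t : ℝ} (ht : |t| < 1)
    {w : Fin n → ℝ} (hw : (t • Aᵀ) *ᵥ w = w) : w = 0 := by
  have hle : ∑ i, |w i| ≤ |t| * ∑ i, |w i| := by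
    simpa [hw] using hA.sum_abs_smul_transpose_pow_mulVec_le t 1 w
  have hzero : ∑ i, |w i| = 0 := by
    nlinarith [Finset.sum_nonneg fun i (_ : i ∈ Finset.univ) => abs_nonneg (w i), abs_nonneg t]
  funext i
  simpa using (Finset.sum_eq_zero_iff_of_nonneg fun i _ => abs_nonneg (w i)).1 hzero i
    (Finset.mem_univ i)

theorem eq_tsum_of_eq_add_smul_transpose_mulVec (hA : RowStochastic A) {t : ℝ} (ht : |t| < 1)
    {v w : Fin n → ℝ} (hw : w = v + (t • Aᵀ) *ᵥ w) :
    w = ∑' k : ℕ, ((t • Aᵀ) ^ k) *ᵥ v := by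
  have hs := tsum_pow_mulVec_eq_add (hA.summable_smul_transpose_pow_mulVec ht v)
  refine sub_eq_zero.1 (hA.eq_zero_of_smul_transpose_mulVec_eq ht ?_)
  rw [mulVec_sub]
  conv_rhs => rw [hw, hs]
  abel

end RowStochastic

theorem stmt_1_general {n : ℕ} (A B : Matrix (Fin n) (Fin n) ℝ)
    (hA : RowStochastic A) (hB : RowStochastic B)
    (c : ℝ) (hc0 : 0 < c) (hc1 : c < 1) (q : Fin n → ℝ)
    (rold : Fin n → ℝ)
    (hrold : rold = ∑' k : ℕ, (((1 - c) • Aᵀ) ^ k).mulVec (c • q))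
    (qoffset : Fin n → ℝ)
    (hqoffset : qoffset = (1 - c) • (Bᵀ - Aᵀ).mulVec rold)
    (roffset : Fin n → ℝ)
    (hroffset : roffset = ∑' i : ℕ, (((1 - c) • Bᵀ) ^ i).mulVec qoffset) :
    rold + roffset = ∑' i : ℕ, (((1 - c) • Bᵀ) ^ i).mulVec (c • q) := by
  have hc : |1 - c| < 1 := abs_lt.2 ⟨by linarith, by linarith⟩
  have hold : rold = c • q + ((1 - c) • Aᵀ) *ᵥ rold := by
    rw [hrold]; exact tsum_pow_mulVec_eq_add (hA.summable_smul_transpose_pow_mulVec hc _)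
  have hoffset : roffset = qoffset + ((1 - c) • Bᵀ) *ᵥ roffset := by
    rw [hroffset]; exact tsum_pow_mulVec_eq_add (hB.summable_smul_transpose_pow_mulVec hc _)
  refine hB.eq_tsum_of_eq_add_smul_transpose_mulVec hc ?_
  calc rold + roffset
      = c • q + ((1 - c) • Aᵀ) *ᵥ rold + (qoffset + ((1 - c) • Bᵀ) *ᵥ roffset) := by
        conv_lhs => rw [hold, hoffset]
    _ = c • q + ((1 - c) • Bᵀ) *ᵥ (rold + roffset) := by
        simp only [hqoffset, mulVec_add, smul_mulVec, sub_mulVec, smul_sub]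
        abel

/-- Theorem 1 (Exactness of OSP): `r_old + r_offset` equals the exact RWR score
vector `∑_{i=0}^∞ ((1-c) Bᵀ)^i (c q)` of the updated graph. -/
theorem stmt_1 {n : ℕ} (hn : 0 < n) (A B : Matrix (Fin n) (Fin n) ℝ)
    (hA : RowStochastic A) (hB : RowStochastic B)
    (c : ℝ) (hc0 : 0 < c) (hc1 : c < 1) (q : Fin n → ℝ)
    (rold : Fin n → ℝ)
    (hrold : rold = ∑' k : ℕ, (((1 - c) • Aᵀ) ^ k).mulVec (c • q))
    (qoffset : Fin n → ℝ)
    (hqoffset : qoffset = (1 - c) • (Bᵀ - Aᵀ).mulVec rold)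
    (roffset : Fin n → ℝ)
    (hroffset : roffset = ∑' i : ℕ, (((1 - c) • Bᵀ) ^ i).mulVec qoffset) :
    rold + roffset = ∑' i : ℕ, (((1 - c) • Bᵀ) ^ i).mulVec (c • q) :=
  stmt_1_general A B hA hB c hc0 hc1 q rold hrold qoffset hqoffset roffset hroffset
end

section
/- Let n be a positive integer, let A and B be n×n row-stochastic real matrices, let 0 < c < 1, let ε > 0, and let r_old ∈ ℝⁿ satisfy ‖r_old‖₁ = 1. Define q_offset = (1−c)·(Bᵀ − Aᵀ)·r_old and x^(i) = ((1−c)·Bᵀ)^i · q_offset. Then for every natural number i such that (1−c)^i ≤ ε/(2(1−c)), it holds that ‖x^(i)‖₁ ≤ ε; consequently OSP-T terminates within log_{(1−c)}(ε/(2(1−c))) iterations, which is less than log_{(1−c)}(ε/2) iterations. (Iteration-count content of Theorem 2: Time complexity of OSP-T.) -/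
open Matrix

/-- The ℓ1 norm of a vector in `ℝⁿ`: the sum of absolute values of entries. -/
def l1norm {n : ℕ} (v : Fin n → ℝ) : ℝ := ∑ i, |v i|

lemma l1norm_nonneg {n : ℕ} (v : Fin n → ℝ) : 0 ≤ l1norm v :=
  Finset.sum_nonneg fun i _ => abs_nonneg _

lemma l1norm_smul {n : ℕ} (a : ℝ) (v : Fin n → ℝ) : l1norm (a • v) = |a| * l1norm v := by
  simp [l1norm, abs_mul, Finset.mul_sum]

lemma l1norm_transpose_mulVec {n : ℕ} {M : Matrix (Fin n) (Fin n) ℝ}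
    (hM : RowStochastic M) (v : Fin n → ℝ) : l1norm (Mᵀ.mulVec v) ≤ l1norm v := by
  obtain ⟨h0, h1⟩ := hM
  calc l1norm (Mᵀ.mulVec v) = ∑ j, |∑ i, M i j * v i| := by
        simp [l1norm, Matrix.mulVec, dotProduct, Matrix.transpose]
    _ ≤ ∑ j, ∑ i, M i j * |v i| := by
        refine Finset.sum_le_sum fun j _ => ?_
        refine (Finset.abs_sum_le_sum_abs _ _).trans ?_
        refine Finset.sum_le_sum fun i _ => ?_
        rw [abs_mul, abs_of_nonneg (h0 i j)]
    _ = ∑ i, (∑ j, M i j) * |v i| := by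
        rw [Finset.sum_comm]; simp [Finset.sum_mul]
    _ = l1norm v := by simp [h1, l1norm]

lemma l1norm_pow_mulVec {n : ℕ} {M : Matrix (Fin n) (Fin n) ℝ}
    (hM : RowStochastic M) (a : ℝ) (ha : 0 ≤ a) (w : Fin n → ℝ) :
    ∀ i : ℕ, l1norm (((a • Mᵀ) ^ i).mulVec w) ≤ a ^ i * l1norm w := by
  intro i
  induction i with
  | zero => simp [Matrix.one_mulVec]
  | succ k ih =>
      rw [pow_succ']
      rw [← Matrix.mulVec_mulVec, Matrix.smul_mulVec, l1norm_smul, abs_of_nonneg ha, pow_succ']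
      rw [mul_assoc]
      exact mul_le_mul_of_nonneg_left ((l1norm_transpose_mulVec hM _).trans ih) ha

/-- Iteration-count content of Theorem 2 (Time complexity of OSP-T):
for every `i` with `(1-c)^i ≤ ε / (2(1-c))`, the interim score vector
`x^(i) = ((1-c)Bᵀ)^i q_offset` satisfies `‖x^(i)‖₁ ≤ ε`. -/
theorem stmt_6 {n : ℕ} (hn : 0 < n) (A B : Matrix (Fin n) (Fin n) ℝ)
    (hA : RowStochastic A) (hB : RowStochastic B)
    (c : ℝ) (hc0 : 0 < c) (hc1 : c < 1) (ε : ℝ) (hε : 0 < ε)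
    (rold : Fin n → ℝ) (hrold : l1norm rold = 1)
    (qoffset : Fin n → ℝ)
    (hqoffset : qoffset = (1 - c) • (Bᵀ - Aᵀ).mulVec rold)
    (x : ℕ → Fin n → ℝ)
    (hx : ∀ i : ℕ, x i = (((1 - c) • Bᵀ) ^ i).mulVec qoffset) :
    ∀ i : ℕ, (1 - c) ^ i ≤ ε / (2 * (1 - c)) → l1norm (x i) ≤ ε := by
  intro i hi
  have hc : (0:ℝ) < 1 - c := by linarith
  have hq : l1norm qoffset ≤ 2 * (1 - c) := by
    rw [hqoffset, l1norm_smul, abs_of_nonneg hc.le]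
    have hsub : (Bᵀ - Aᵀ).mulVec rold = Bᵀ.mulVec rold - Aᵀ.mulVec rold := by
      rw [Matrix.sub_mulVec]
    rw [hsub]
    have htri : l1norm (Bᵀ.mulVec rold - Aᵀ.mulVec rold) ≤
        l1norm (Bᵀ.mulVec rold) + l1norm (Aᵀ.mulVec rold) := by
      unfold l1norm
      rw [← Finset.sum_add_distrib]
      exact Finset.sum_le_sum fun j _ => abs_sub _ _
    have hBb := l1norm_transpose_mulVec hB rold
    have hAb := l1norm_transpose_mulVec hA rold
    nlinarith [htri]
  calc l1norm (x i) ≤ (1 - c) ^ i * l1norm qoffset := by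
        rw [hx i]; exact l1norm_pow_mulVec hB (1 - c) hc.le qoffset i
    _ ≤ (ε / (2 * (1 - c))) * (2 * (1 - c)) := by
        apply mul_le_mul hi hq (l1norm_nonneg _)
        positivity
    _ = ε := by field_simp
end

section
/- Let n be a positive integer, let 0 < c < 1, let S be an n×n real matrix with nonnegative entries whose column sums are all at most 1, let q ∈ ℝⁿ be a vector with nonnegative entries and ‖q‖₁ = 1, and let d ∈ ℝⁿ be the deficiency vector defined by d_j = 1 − ∑_i S_{ij}. Define r_temp = c·∑_{i=0}^∞ ((1−c)·S)^i · q. Then ‖r_temp‖₁ > 0, and the vector r_final = r_temp / ‖r_temp‖₁ is the unique vector r ∈ ℝⁿ satisfying r = (1−c)·(S + q·dᵀ)·r + c·q. That is, scaling the unadjusted propagation result r_temp by 1/‖r_temp‖₁ yields exactly the RWR score vector of the graph in which every dead-end is connected to the seed node. (Theorem 4: Exactness of dead-end handling.) -/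
open Matrix

/-- Theorem 4 (Exactness of dead-end handling): for a column-substochastic
matrix `S` (nonnegative entries, column sums at most `1`), a nonnegative seed
vector `q` with `‖q‖₁ = 1`, and the deficiency vector `d j = 1 - ∑ i, S i j`,
the unadjusted propagation result `r_temp = c ∑_{i=0}^∞ ((1-c)S)^i q` has
positive ℓ1 norm, and `r_temp / ‖r_temp‖₁` is the unique solution of the RWR
equation `r = (1-c)(S + q dᵀ) r + c q` of the graph in which every dead-end is
connected back to the seed node. -/
theorem stmt_9 {n : ℕ} (hn : 0 < n) (c : ℝ) (hc0 : 0 < c) (hc1 : c < 1)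
    (S : Matrix (Fin n) (Fin n) ℝ)
    (hS0 : ∀ i j, 0 ≤ S i j) (hScol : ∀ j, ∑ i, S i j ≤ 1)
    (q : Fin n → ℝ) (hq0 : ∀ i, 0 ≤ q i) (hq1 : l1norm q = 1)
    (d : Fin n → ℝ) (hd : ∀ j, d j = 1 - ∑ i, S i j)
    (rtemp : Fin n → ℝ)
    (hrtemp : rtemp = c • ∑' i : ℕ, (((1 - c) • S) ^ i).mulVec q) :
    0 < l1norm rtemp ∧
    ∀ r : Fin n → ℝ,
      (r = (1 - c) • (S + vecMulVec q d).mulVec r + c • q ↔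
        r = (l1norm rtemp)⁻¹ • rtemp) := by
  have hc1' : (0:ℝ) < 1 - c := by linarith
  set A : Matrix (Fin n) (Fin n) ℝ := (1 - c) • S with hA
  set f : ℕ → (Fin n → ℝ) := fun m => (A ^ m).mulVec q with hf
  have hq1' : ∑ i, q i = 1 := by
    rw [← hq1]; unfold l1norm
    exact Finset.sum_congr rfl (fun i _ => (abs_of_nonneg (hq0 i)).symm)
  have hA0 : ∀ i j, 0 ≤ A i j := by
    intro i j
    simp only [hA, Matrix.smul_apply, smul_eq_mul]
    exact mul_nonneg hc1'.le (hS0 i j)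
  have hpow0 : ∀ m i j, 0 ≤ (A ^ m) i j := by
    intro m
    induction m with
    | zero => intro i j; simp [Matrix.one_apply]; split <;> norm_num
    | succ m ih =>
      intro i j
      rw [pow_succ, Matrix.mul_apply]
      exact Finset.sum_nonneg fun k _ => mul_nonneg (ih i k) (hA0 k j)
  have hAcol : ∀ j, ∑ i, A i j ≤ 1 - c := by
    intro j
    simp only [hA, Matrix.smul_apply, smul_eq_mul, ← Finset.mul_sum]
    calc (1 - c) * ∑ i, S i j ≤ (1 - c) * 1 := by
          exact mul_le_mul_of_nonneg_left (hScol j) hc1'.le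
      _ = 1 - c := mul_one _
  have hpowcol : ∀ m j, ∑ i, (A ^ m) i j ≤ (1 - c) ^ m := by
    intro m
    induction m with
    | zero => intro j; simp [Matrix.one_apply]
    | succ m ih =>
      intro j
      have : ∑ i, (A ^ (m+1)) i j = ∑ k, (∑ i, (A ^ m) i k) * A k j := by
        simp only [pow_succ, Matrix.mul_apply, Finset.sum_mul]
        rw [Finset.sum_comm]
      rw [this, pow_succ]
      calc ∑ k, (∑ i, (A ^ m) i k) * A k j
          ≤ ∑ k, (1 - c) ^ m * A k j := by
            apply Finset.sum_le_sum
            intro k _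
            exact mul_le_mul_of_nonneg_right (ih k) (hA0 k j)
        _ = (1 - c) ^ m * ∑ k, A k j := by rw [Finset.mul_sum]
        _ ≤ (1 - c) ^ m * (1 - c) :=
            mul_le_mul_of_nonneg_left (hAcol j) (pow_nonneg hc1'.le m)
  have hf0 : ∀ m k, 0 ≤ f m k := by
    intro m k
    simp only [hf, Matrix.mulVec, dotProduct]
    exact Finset.sum_nonneg fun j _ => mul_nonneg (hpow0 m k j) (hq0 j)
  have hfsum : ∀ m, ∑ k, f m k ≤ (1 - c) ^ m := by
    intro m
    have : ∑ k, f m k = ∑ j, (∑ k, (A ^ m) k j) * q j := by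
      simp only [hf, Matrix.mulVec, dotProduct, Finset.sum_mul]
      rw [Finset.sum_comm]
    rw [this]
    calc ∑ j, (∑ k, (A ^ m) k j) * q j
        ≤ ∑ j, (1 - c) ^ m * q j := by
          apply Finset.sum_le_sum
          intro j _
          exact mul_le_mul_of_nonneg_right (hpowcol m j) (hq0 j)
      _ = (1 - c) ^ m * ∑ j, q j := by rw [Finset.mul_sum]
      _ = (1 - c) ^ m := by rw [hq1', mul_one]
  have hfle : ∀ m k, f m k ≤ (1 - c) ^ m := by
    intro m k
    exact le_trans (Finset.single_le_sum (fun i _ => hf0 m i) (Finset.mem_univ k)) (hfsum m)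
  have hsumc : ∀ k, Summable (fun m => f m k) := by
    intro k
    exact Summable.of_nonneg_of_le (fun m => hf0 m k) (fun m => hfle m k)
      (summable_geometric_of_lt_one (by linarith) (by linarith))
  have hsum : Summable f := Pi.summable.2 hsumc
  set T : Fin n → ℝ := ∑' m, f m with hT
  have hTapp : ∀ k, T k = ∑' m, f m k := fun k => tsum_apply hsum
  have hrt : rtemp = c • T := hrtemp
  -- recursion: T = q + A *ᵥ T
  have hfz : f 0 = q := by simp [hf]
  have hfs : ∀ m, f (m + 1) = A.mulVec (f m) := by
    intro m
    simp only [hf, pow_succ']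
    rw [← Matrix.mulVec_mulVec]
  have hmap : A.mulVec T = ∑' m, A.mulVec (f m) := by
    have := (LinearMap.toContinuousLinearMap (Matrix.mulVecLin A)).map_tsum hsum
    simpa using this
  have hTrec : T = q + A.mulVec T := by
    calc T = f 0 + ∑' m, f (m + 1) := Summable.tsum_eq_zero_add hsum
      _ = q + ∑' m, A.mulVec (f m) := by rw [hfz]; congr 1; exact tsum_congr hfs
      _ = q + A.mulVec T := by rw [hmap]
  have hrec : rtemp = A.mulVec rtemp + c • q := by
    rw [hrt]
    nth_rewrite 1 [hTrec]
    rw [Matrix.mulVec_smul]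
    module
  have hrt0 : ∀ k, 0 ≤ rtemp k := by
    intro k
    rw [hrt]
    simp only [Pi.smul_apply, smul_eq_mul]
    exact mul_nonneg hc0.le (by rw [hTapp k]; exact tsum_nonneg fun m => hf0 m k)
  have hrtq : ∀ k, c * q k ≤ rtemp k := by
    intro k
    rw [hrt]
    simp only [Pi.smul_apply, smul_eq_mul]
    apply mul_le_mul_of_nonneg_left _ hc0.le
    rw [hTapp k, ← hfz]
    exact Summable.le_tsum (hsumc k) 0 (fun m _ => hf0 m k)
  have hNsum : l1norm rtemp = ∑ k, rtemp k := by
    unfold l1norm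
    exact Finset.sum_congr rfl fun k _ => abs_of_nonneg (hrt0 k)
  set N := l1norm rtemp with hNdef
  have hNpos : 0 < N := by
    rw [hNsum]
    calc (0:ℝ) < c := hc0
      _ = ∑ k, c * q k := by rw [← Finset.mul_sum, hq1', mul_one]
      _ ≤ ∑ k, rtemp k := Finset.sum_le_sum fun k _ => hrtq k
  set P := ∑ j, (∑ i, S i j) * rtemp j with hP
  have hNP : N = (1 - c) * P + c := by
    have h1 : ∑ k, (A.mulVec rtemp) k = (1 - c) * P := by
      simp only [Matrix.mulVec, dotProduct, hA, Matrix.smul_apply, smul_eq_mul]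
      rw [Finset.sum_comm]
      rw [hP, Finset.mul_sum]
      apply Finset.sum_congr rfl
      intro j _
      rw [Finset.sum_mul, Finset.mul_sum]
      exact Finset.sum_congr rfl fun i _ => by ring
    have h2 : ∑ k, rtemp k = ∑ k, (A.mulVec rtemp) k + ∑ k, c * q k := by
      rw [← Finset.sum_add_distrib]
      apply Finset.sum_congr rfl
      intro k _
      nth_rewrite 1 [hrec]
      simp
    rw [hNsum, h2, h1, ← Finset.mul_sum, hq1', mul_one]
  have hdr : d ⬝ᵥ rtemp = N - P := by
    simp only [dotProduct]
    rw [hNsum, hP, ← Finset.sum_sub_distrib]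
    apply Finset.sum_congr rfl
    intro j _
    rw [hd j]
    ring
  -- the adjusted matrix
  set M := S + vecMulVec q d with hM
  have hMmul : ∀ v : Fin n → ℝ, M.mulVec v = S.mulVec v + (d ⬝ᵥ v) • q := by
    intro v
    rw [hM, Matrix.add_mulVec]
    congr 1
    ext k
    simp only [Matrix.mulVec, dotProduct, vecMulVec_apply, Pi.smul_apply, smul_eq_mul]
    rw [Finset.sum_mul]
    exact Finset.sum_congr rfl fun j _ => by ring
  -- properties of M
  have hd0 : ∀ j, 0 ≤ d j := fun j => by rw [hd j]; linarith [hScol j]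
  have hM0 : ∀ i j, 0 ≤ M i j := by
    intro i j
    simp only [hM, Matrix.add_apply, vecMulVec_apply]
    exact add_nonneg (hS0 i j) (mul_nonneg (hq0 i) (hd0 j))
  have hMcol : ∀ j, ∑ i, M i j ≤ 1 := by
    intro j
    simp only [hM, Matrix.add_apply, vecMulVec_apply]
    rw [Finset.sum_add_distrib, ← Finset.sum_mul, hq1', one_mul, hd j]
    linarith
  -- contraction in l1 norm
  have hcontr : ∀ e : Fin n → ℝ, l1norm (M.mulVec e) ≤ l1norm e := by
    intro e
    unfold l1norm
    calc ∑ k, |(M.mulVec e) k| ≤ ∑ k, ∑ j, M k j * |e j| := by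
          apply Finset.sum_le_sum
          intro k _
          simp only [Matrix.mulVec, dotProduct]
          calc |∑ j, M k j * e j| ≤ ∑ j, |M k j * e j| := Finset.abs_sum_le_sum_abs _ _
            _ = ∑ j, M k j * |e j| := Finset.sum_congr rfl fun j _ => by
                rw [abs_mul, abs_of_nonneg (hM0 k j)]
      _ = ∑ j, (∑ k, M k j) * |e j| := by rw [Finset.sum_comm]; simp [Finset.sum_mul]
      _ ≤ ∑ j, |e j| := by
          apply Finset.sum_le_sum
          intro j _
          exact mul_le_of_le_one_left (abs_nonneg _) (hMcol j)
  -- the rescaled vector satisfies the equation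
  have hsc : (1 - c) * (d ⬝ᵥ rtemp) + c * N = c := by
    rw [hdr]
    linear_combination hNP
  have hkey : (1 - c) • M.mulVec rtemp + (c * N) • q = rtemp := by
    rw [hMmul, smul_add, add_assoc, smul_smul, ← add_smul, hsc]
    nth_rewrite 2 [hrec]
    rw [hA, Matrix.smul_mulVec]
  have hNne : N ≠ 0 := ne_of_gt hNpos
  have hrf : (N⁻¹ • rtemp) = (1 - c) • M.mulVec (N⁻¹ • rtemp) + c • q := by
    rw [Matrix.mulVec_smul, smul_comm]
    have : c • q = N⁻¹ • ((c * N) • q) := by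
      rw [smul_smul]
      congr 1
      field_simp
    rw [this, ← smul_add, hkey]
  constructor
  · exact hNpos
  · intro r
    constructor
    · intro hr
      -- uniqueness via contraction
      set e : Fin n → ℝ := r - N⁻¹ • rtemp with he
      have heq : e = (1 - c) • M.mulVec e := by
        rw [he, Matrix.mulVec_sub, smul_sub]
        nth_rewrite 1 [hr]
        nth_rewrite 1 [hrf]
        abel
      have hsmul : l1norm ((1 - c) • M.mulVec e) = (1 - c) * l1norm (M.mulVec e) := by
        unfold l1norm
        rw [Finset.mul_sum]
        apply Finset.sum_congr rfl
        intro k _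
        simp [abs_mul, abs_of_nonneg hc1'.le]
      have hle1 : l1norm e ≤ (1 - c) * l1norm e := by
        calc l1norm e = l1norm ((1 - c) • M.mulVec e) := congrArg l1norm heq
          _ = (1 - c) * l1norm (M.mulVec e) := hsmul
          _ ≤ (1 - c) * l1norm e := mul_le_mul_of_nonneg_left (hcontr e) hc1'.le
      have hn0 : 0 ≤ l1norm e := Finset.sum_nonneg fun k _ => abs_nonneg _
      have hz : l1norm e = 0 := by nlinarith
      have : ∀ k, e k = 0 := by
        intro k
        have := (Finset.sum_eq_zero_iff_of_nonneg
          (fun i (_ : i ∈ Finset.univ) => abs_nonneg (e i))).1 hz k (Finset.mem_univ k)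
        exact abs_eq_zero.1 this
      funext k
      have := this k
      rw [he] at this
      simp only [Pi.sub_apply] at this
      linarith [this]
    · intro hr
      rw [hr]
      exact hrf
end
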